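/- arXiv:cs/0504083 — 2 statements merged into one kernel-verified Lean document; each statement's English description precedes it below -/
import Mathlib

section
/- For the binary-Hamming stegosystem, the hiding capacity satisfies C(D) = max over channels q(x|x̃) with E[d_H(X̃,X)] ≤ D of H(X | X̃) = H(min(D, 1/2)) when the cover X̃ is Bernoulli(1/2); i.e., C(D) = H(D) for 0 ≤ D ≤ 1/2 and C(D) = 1 for D > 1/2. -/
/-! With a uniform cover, a channel `q` is determined by its two flip probabilities `p₀, p₁`; its
distortion is their mean `m` and its conditional entropy is the mean of `H(p₀)` and `H(p₁)`.
Concavity of `H` bounds the latter by `H(m)`, and `H` increases on `[0, 1/2]` up to its maximum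
`H(1/2) = 1`, so `H(m) ≤ H(min(D, 1/2))`. The binary symmetric channel with flip probability
`min(D, 1/2)` attains the bound. -/

open Real Finset

/-- Binary entropy function (base 2). -/
noncomputable def binH (x : ℝ) : ℝ :=
  -(x * Real.logb 2 x) - (1 - x) * Real.logb 2 (1 - x)

/-- Hamming distance on bits. -/
def dH (a b : Bool) : ℝ := if a = b then 0 else 1

lemma binH_eq_binEntropy_div_log_two (x : ℝ) : binH x = binEntropy x / log 2 := by
  unfold binH binEntropy logb
  rw [log_inv, log_inv]
  ring

lemma binH_one_sub (x : ℝ) : binH (1 - x) = binH x := by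
  unfold binH
  ring_nf

lemma binH_half : binH (1 / 2) = 1 := by
  rw [binH_eq_binEntropy_div_log_two, one_div, binEntropy_two_inv,
    div_self (log_pos one_lt_two).ne']

lemma binH_le_one (x : ℝ) : binH x ≤ 1 := by
  rw [binH_eq_binEntropy_div_log_two, div_le_one (log_pos one_lt_two)]
  exact binEntropy_le_log_two

lemma monotoneOn_binH : MonotoneOn binH (Set.Icc 0 (1 / 2)) := by
  intro a ha b hb hab
  rw [binH_eq_binEntropy_div_log_two, binH_eq_binEntropy_div_log_two]
  rw [one_div] at ha hb
  gcongr
  exact binEntropy_strictMonoOn.monotoneOn ha hb hab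

lemma concaveOn_binH : ConcaveOn ℝ (Set.Icc 0 1) binH := by
  have h_eq : binH = fun x => (log 2)⁻¹ • binEntropy x := by
    ext x
    rw [binH_eq_binEntropy_div_log_two, smul_eq_mul, div_eq_inv_mul]
  rw [h_eq]
  exact strictConcave_binEntropy.concaveOn.smul (inv_nonneg.2 (log_pos one_lt_two).le)

lemma binH_le_binH_min_half {m D : ℝ} (hm : 0 ≤ m) (hmD : m ≤ D) :
    binH m ≤ binH (min D (1 / 2)) := by
  rcases le_or_gt m (1 / 2) with hm_half | hm_half
  · exact monotoneOn_binH ⟨hm, hm_half⟩ ⟨le_min (hm.trans hmD) (by norm_num), min_le_right _ _⟩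
      (le_min hmD hm_half)
  · rw [min_eq_right (hm_half.trans_le hmD).le, binH_half]
    exact binH_le_one m

lemma sum_neg_mul_logb_eq_binH {r : Bool → ℝ} (hr : ∑ x, r x = 1) (b : Bool) :
    ∑ x, -(r x * logb 2 (r x)) = binH (r b) := by
  rw [Fintype.sum_bool] at hr
  have h_true : r true = 1 - r false := by linarith
  have h_sum : ∑ x, -(r x * logb 2 (r x)) = binH (r false) := by
    rw [Fintype.sum_bool, h_true, binH]
    ring
  cases b
  · exact h_sum
  · rw [h_sum, h_true, binH_one_sub]

noncomputable def uniformCondEntropy (q : Bool → Bool → ℝ) : ℝ :=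
  ∑ xt, (1 / 2 : ℝ) * ∑ x, -(q xt x * logb 2 (q xt x))

noncomputable def uniformDistortion (q : Bool → Bool → ℝ) : ℝ :=
  ∑ xt, ∑ x, dH xt x * q xt x * (1 / 2)

def binarySymmetricChannel (p : ℝ) (xt x : Bool) : ℝ := if x = xt then 1 - p else p

section Channel

variable {q : Bool → Bool → ℝ}

lemma uniformCondEntropy_eq (hq : ∀ xt, ∑ x, q xt x = 1) :
    uniformCondEntropy q = (binH (q false true) + binH (q true false)) / 2 := by
  rw [uniformCondEntropy, Fintype.sum_bool, sum_neg_mul_logb_eq_binH (hq true) false,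
    sum_neg_mul_logb_eq_binH (hq false) true]
  ring

lemma uniformDistortion_eq :
    uniformDistortion q = (q false true + q true false) / 2 := by
  simp only [uniformDistortion, Fintype.sum_bool, dH]
  norm_num
  ring

lemma uniformCondEntropy_le_binH_min_half {D : ℝ} (hq₀ : ∀ xt x, 0 ≤ q xt x)
    (hq : ∀ xt, ∑ x, q xt x = 1) (hD : uniformDistortion q ≤ D) :
    uniformCondEntropy q ≤ binH (min D (1 / 2)) := by
  have h_le_one : ∀ xt x, q xt x ≤ 1 := fun xt x => by
    have := hq xt
    rw [Fintype.sum_bool] at this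
    cases x <;> linarith [hq₀ xt true, hq₀ xt false]
  have h_mem : ∀ xt x, q xt x ∈ Set.Icc (0 : ℝ) 1 := fun xt x => ⟨hq₀ xt x, h_le_one xt x⟩
  have h_concave := concaveOn_binH.2 (h_mem false true) (h_mem true false)
    (by norm_num : (0 : ℝ) ≤ 1 / 2) (by norm_num : (0 : ℝ) ≤ 1 / 2) (by norm_num)
  rw [uniformDistortion_eq] at hD
  calc uniformCondEntropy q
      = (1 / 2 : ℝ) • binH (q false true) + (1 / 2 : ℝ) • binH (q true false) := by
        rw [uniformCondEntropy_eq hq, smul_eq_mul, smul_eq_mul]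
        ring
    _ ≤ binH ((1 / 2 : ℝ) • q false true + (1 / 2 : ℝ) • q true false) := h_concave
    _ = binH ((q false true + q true false) / 2) := by
        rw [smul_eq_mul, smul_eq_mul]
        ring_nf
    _ ≤ binH (min D (1 / 2)) :=
        binH_le_binH_min_half (by linarith [hq₀ false true, hq₀ true false]) hD

end Channel

lemma binarySymmetricChannel_nonneg {p : ℝ} (hp₀ : 0 ≤ p) (hp₁ : p ≤ 1) (xt x : Bool) :
    0 ≤ binarySymmetricChannel p xt x := by
  unfold binarySymmetricChannel
  split_ifs <;> linarith

lemma sum_binarySymmetricChannel (p : ℝ) (xt : Bool) :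
    ∑ x, binarySymmetricChannel p xt x = 1 := by
  cases xt <;> simp [binarySymmetricChannel]

lemma uniformDistortion_binarySymmetricChannel (p : ℝ) :
    uniformDistortion (binarySymmetricChannel p) = p := by
  rw [uniformDistortion_eq]
  simp [binarySymmetricChannel]

lemma uniformCondEntropy_binarySymmetricChannel (p : ℝ) :
    uniformCondEntropy (binarySymmetricChannel p) = binH p := by
  rw [uniformCondEntropy_eq (sum_binarySymmetricChannel p)]
  simp [binarySymmetricChannel]

/-- Hiding capacity of the binary-Hamming stegosystem with a Bernoulli(1/2) cover:
the maximum of `H(X | X̃)` over channels `q(x|xt)` with expected Hamming distortion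
at most `D` equals `H(min(D, 1/2))`, i.e. `H(D)` for `0 ≤ D ≤ 1/2` and `1` for `D > 1/2`. -/
theorem binary_hamming_hiding_capacity (D : ℝ) (hD : 0 ≤ D) :
    IsGreatest
      {h : ℝ | ∃ q : Bool → Bool → ℝ,
        (∀ xt x, 0 ≤ q xt x) ∧ (∀ xt, ∑ x, q xt x = 1) ∧
        (∑ xt, ∑ x, dH xt x * q xt x * (1 / 2)) ≤ D ∧
        h = ∑ xt, (1 / 2 : ℝ) * ∑ x, -(q xt x * Real.logb 2 (q xt x))}
      (binH (min D (1 / 2))) ∧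
    (D ≤ 1 / 2 → binH (min D (1 / 2)) = binH D) ∧
    (1 / 2 < D → binH (min D (1 / 2)) = 1) := by
  have hd₀ : 0 ≤ min D (1 / 2) := le_min hD (by norm_num)
  have hd₁ : min D (1 / 2) ≤ 1 := (min_le_right _ _).trans (by norm_num)
  have h_distortion : uniformDistortion (binarySymmetricChannel (min D (1 / 2))) ≤ D :=
    (uniformDistortion_binarySymmetricChannel _).le.trans (min_le_left _ _)
  refine ⟨⟨⟨binarySymmetricChannel (min D (1 / 2)), binarySymmetricChannel_nonneg hd₀ hd₁,
    sum_binarySymmetricChannel _, h_distortion,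
    (uniformCondEntropy_binarySymmetricChannel _).symm⟩, ?_⟩,
    fun h => by rw [min_eq_left h], fun h => by rw [min_eq_right h.le, binH_half]⟩
  rintro _ ⟨q, hq₀, hq, hqD, rfl⟩
  exact uniformCondEntropy_le_binH_min_half hq₀ hq hqD
end

section
/- Fix p₀ > p₁ in (0,1), w_f, w_m > 0, and set Δp = p₀ − p₁. Define n = ⌈((w_m √(p₀(1−p₀)) + w_f √(p₁(1−p₁))) / Δp)²⌉ and T = w_f √(n p₁(1−p₁)) + n p₁. Then T ≤ n p₀ − w_m √(n p₀(1−p₀)); i.e., the threshold T lies at least w_m standard deviations below the mean n p₀ and at least w_f standard deviations above the mean n p₁. -/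
open Real

/-!
Writing `s = √(p(1-p))`, the standard deviation of a binomial count is `√(n p (1-p)) = √n s`.
The claim therefore reads `√n (w_m s₀ + w_f s₁) ≤ n Δp`, which is what the choice of `n`
guarantees: `n ≥ ((w_m s₀ + w_f s₁)/Δp)²` gives `√n Δp ≥ w_m s₀ + w_f s₁`.
-/

theorem Real.sqrt_mul_le_mul_of_div_sq_le {a d x : ℝ} (hd : 0 < d) (h : (a / d) ^ 2 ≤ x) :
    √x * a ≤ x * d := by
  have hx : 0 ≤ x := (sq_nonneg _).trans h
  have ha : a ≤ √x * d := (div_le_iff₀ hd).1 ((le_abs_self _).trans (Real.abs_le_sqrt h))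
  calc √x * a ≤ √x * (√x * d) := mul_le_mul_of_nonneg_left ha (sqrt_nonneg x)
    _ = x * d := by rw [← mul_assoc, mul_self_sqrt hx]

theorem Real.sqrt_mul_mul_of_nonneg {x : ℝ} (hx : 0 ≤ x) (a b : ℝ) :
    √(x * a * b) = √x * √(a * b) := by
  rw [mul_assoc, Real.sqrt_mul hx]

theorem correlation_attack_threshold_general
    (p₀ p₁ w_f w_m : ℝ) (hlt : p₁ < p₀)
    (n : ℕ)
    (hn : n = ⌈((w_m * Real.sqrt (p₀ * (1 - p₀)) + w_f * Real.sqrt (p₁ * (1 - p₁))) /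
        (p₀ - p₁)) ^ 2⌉₊)
    (T : ℝ)
    (hT : T = w_f * Real.sqrt ((n : ℝ) * p₁ * (1 - p₁)) + (n : ℝ) * p₁) :
    T ≤ (n : ℝ) * p₀ - w_m * Real.sqrt ((n : ℝ) * p₀ * (1 - p₀)) := by
  have hceil : ((w_m * √(p₀ * (1 - p₀)) + w_f * √(p₁ * (1 - p₁))) / (p₀ - p₁)) ^ 2 ≤ n :=
    hn ▸ Nat.le_ceil _
  have key := Real.sqrt_mul_le_mul_of_div_sq_le (sub_pos.mpr hlt) hceil
  rw [hT, Real.sqrt_mul_mul_of_nonneg n.cast_nonneg, Real.sqrt_mul_mul_of_nonneg n.cast_nonneg]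
  linarith

/-- The sample-size and threshold formulas of the correlation attack: with
`n = ⌈((w_m √(p₀(1−p₀)) + w_f √(p₁(1−p₁)))/Δp)²⌉` and
`T = w_f √(n p₁(1−p₁)) + n p₁`, the threshold lies at least `w_m` standard
deviations below the mean `n p₀` (and, by construction, `w_f` standard deviations
above the mean `n p₁`). -/
theorem correlation_attack_threshold
    (p₀ p₁ w_f w_m : ℝ) (hp₁0 : 0 < p₁) (hp₀1 : p₀ < 1) (hlt : p₁ < p₀)
    (hwf : 0 < w_f) (hwm : 0 < w_m)
    (n : ℕ)
    (hn : n = ⌈((w_m * Real.sqrt (p₀ * (1 - p₀)) + w_f * Real.sqrt (p₁ * (1 - p₁))) /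
        (p₀ - p₁)) ^ 2⌉₊)
    (T : ℝ)
    (hT : T = w_f * Real.sqrt ((n : ℝ) * p₁ * (1 - p₁)) + (n : ℝ) * p₁) :
    T ≤ (n : ℝ) * p₀ - w_m * Real.sqrt ((n : ℝ) * p₀ * (1 - p₀)) :=
  correlation_attack_threshold_general p₀ p₁ w_f w_m hlt n hn T hT
end
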